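/- arXiv:2012.03235 — 2 statements merged into one kernel-verified Lean document; each statement's English description precedes it below -/
import Mathlib

section
/- In the block construction, writing N_j for the number of sets in F containing exactly j blocks, we have, for all j ∈ [m−1], N_{j+1}/N_j = ((m − j)/(j + 1)) · 2^{−s} ≤ m · 2^{−s}. -/
/-!
Every member of the family is `⋃_{i ∈ S} B i ∪ U` for a nonempty set `S` of blocks and a set
`U` of points of the `T i` with `i ∉ S`; since `|T i| < |B i|`, the blocks it contains are
exactly those of `S`, and `(S, U)` is determined by the set. Hence `N_j = C(m, j) · 2^{s(m-j)}`
for `j ≥ 1`, and the ratio comes from `C(m, j+1) (j+1) = C(m, j) (m-j)`.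
-/

open Finset

/-- A family of finite sets is union-closed if it contains the union of any two of
its members. -/
def UnionClosed {α : Type*} [DecidableEq α] (F : Finset (Finset α)) : Prop :=
  ∀ A ∈ F, ∀ B ∈ F, A ∪ B ∈ F

/-- The abundance of `x` with respect to a family `F`. -/
noncomputable def abundance {α : Type*} [DecidableEq α] (F : Finset (Finset α)) (x : α) : ℝ :=
  ((F.filter (fun A => x ∈ A)).card : ℝ) / (F.card : ℝ)

/-- The average overlap density of `F`. -/
noncomputable def AOD {α : Type*} [DecidableEq α] (F : Finset (Finset α)) : ℝ :=
  (1 / (((F.erase ∅).card : ℝ))) *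
    ∑ A ∈ F.erase ∅, (1 / (A.card : ℝ)) * ∑ x ∈ A, abundance F x

/-- The union-closed family generated by `G = {B i ∪ {j} : i, j ∈ T}`:
all unions of nonempty subcollections of `G`. -/
def blockFamily {n m : ℕ} (B : Fin m → Finset (Fin n)) (T : Finset (Fin n)) :
    Finset (Finset (Fin n)) :=
  ((((univ : Finset (Fin m)) ×ˢ T).image (fun p => B p.1 ∪ {p.2})).powerset.filter
      (fun C => C.Nonempty)).image (fun C => C.sup id)

open Function

section Blocks

variable {ι α : Type*} {B T : ι → Finset α}

lemma eq_of_mem_of_pairwise_disjoint (hB : Pairwise (Disjoint on B)) {a b : ι} {x : α}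
    (ha : x ∈ B a) (hb : x ∈ B b) : a = b := by
  by_contra hab
  exact disjoint_left.mp (hB hab) ha hb

variable [DecidableEq ι] [DecidableEq α]

lemma sup_union_singleton_eq (P : Finset (ι × α)) :
    P.sup (fun p => B p.1 ∪ {p.2}) = (P.image Prod.fst).biUnion B ∪ P.image Prod.snd := by
  ext x
  simp only [mem_sup, mem_union, mem_biUnion, mem_image, mem_singleton]
  constructor
  · rintro ⟨p, hp, hx | rfl⟩
    · exact Or.inl ⟨p.1, ⟨p, hp, rfl⟩, hx⟩
    · exact Or.inr ⟨p, hp, rfl⟩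
  · rintro (⟨_, ⟨p, hp, rfl⟩, hx⟩ | ⟨p, hp, rfl⟩)
    · exact ⟨p, hp, Or.inl hx⟩
    · exact ⟨p, hp, Or.inr rfl⟩

variable [Fintype ι]

lemma biUnion_sdiff_biUnion_subset_compl (hT : ∀ i, T i ⊆ B i) (S : Finset ι) :
    univ.biUnion T \ S.biUnion B ⊆ Sᶜ.biUnion T := by
  intro x hx
  obtain ⟨hxT, hxS⟩ := mem_sdiff.mp hx
  obtain ⟨l, -, hxl⟩ := mem_biUnion.mp hxT
  refine mem_biUnion.mpr ⟨l, mem_compl.mpr fun hl => ?_, hxl⟩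
  exact hxS (mem_biUnion.mpr ⟨l, hl, hT l hxl⟩)

lemma filter_subset_biUnion_union_eq (hB : Pairwise (Disjoint on B)) (hT : ∀ i, T i ⊆ B i)
    (hTB : ∀ i, #(T i) < #(B i)) {S : Finset ι} {U : Finset α} (hU : U ⊆ Sᶜ.biUnion T) :
    univ.filter (fun i => B i ⊆ S.biUnion B ∪ U) = S := by
  ext i
  simp only [mem_filter, mem_univ, true_and]
  refine ⟨fun hBi => ?_, fun hi => (subset_biUnion_of_mem B hi).trans subset_union_left⟩
  by_contra hiS
  -- outside `S`, the block `B i` could only be covered by `U`, i.e. by its own smaller `T i`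
  suffices B i ⊆ T i from (card_le_card this).not_gt (hTB i)
  intro x hx
  have hxS : x ∉ S.biUnion B := fun hmem => by
    obtain ⟨l, hl, hxl⟩ := mem_biUnion.mp hmem
    exact hiS (eq_of_mem_of_pairwise_disjoint hB hxl hx ▸ hl)
  obtain ⟨l, -, hxl⟩ := mem_biUnion.mp (hU ((mem_union.mp (hBi hx)).resolve_left hxS))
  exact eq_of_mem_of_pairwise_disjoint hB (hT l hxl) hx ▸ hxl

lemma card_biUnion_compl (hB : Pairwise (Disjoint on B)) (hT : ∀ i, T i ⊆ B i) {s : ℕ}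
    (hTcard : ∀ i, #(T i) = s) (S : Finset ι) :
    #(Sᶜ.biUnion T) = s * (Fintype.card ι - #S) := by
  rw [card_biUnion fun a _ b _ hab => (hB hab).mono (hT a) (hT b),
    sum_const_nat fun i _ => hTcard i, card_compl, mul_comm]

end Blocks

lemma mem_blockFamily {n m : ℕ} {B : Fin m → Finset (Fin n)} {T : Finset (Fin n)}
    {A : Finset (Fin n)} :
    A ∈ blockFamily B T ↔ ∃ S : Finset (Fin m), ∃ V : Finset (Fin n),
      S.Nonempty ∧ V.Nonempty ∧ V ⊆ T ∧ A = S.biUnion B ∪ V := by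
  simp only [blockFamily, mem_image, mem_filter, mem_powerset, subset_image_iff]
  constructor
  · rintro ⟨_, ⟨⟨P, hP, rfl⟩, hPne⟩, rfl⟩
    refine ⟨P.image Prod.fst, P.image Prod.snd, hPne.of_image.image _, hPne.of_image.image _,
      fun x hx => ?_, by rw [sup_image]; exact sup_union_singleton_eq P⟩
    obtain ⟨p, hp, rfl⟩ := mem_image.mp hx
    exact (mem_product.mp (hP hp)).2
  · rintro ⟨S, V, hS, hV, hVT, rfl⟩
    refine ⟨_, ⟨⟨S ×ˢ V, product_subset_product (subset_univ S) hVT, rfl⟩,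
      (hS.product hV).image _⟩, ?_⟩
    rw [sup_image]
    exact (sup_union_singleton_eq _).trans (by rw [product_image_fst hV, product_image_snd hS])

section BlockConstruction

variable {n m s : ℕ} {B T : Fin m → Finset (Fin n)}

lemma blockFamily_filter_card_blocks_eq (hB : Pairwise (Disjoint on B)) (hT : ∀ i, T i ⊆ B i)
    (hTne : ∀ i, (T i).Nonempty) (hTB : ∀ i, #(T i) < #(B i)) {j : ℕ} (hj : 1 ≤ j) :
    (blockFamily B (univ.biUnion T)).filter (fun A => #(univ.filter (fun i => B i ⊆ A)) = j) =
      ((powersetCard j univ).sigma fun S => (Sᶜ.biUnion T).powerset).image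
        fun p => p.1.biUnion B ∪ p.2 := by
  ext A
  simp only [mem_filter, mem_image, mem_sigma, mem_powersetCard_univ, mem_powerset,
    mem_blockFamily]
  constructor
  · rintro ⟨⟨S, V, -, -, hV, rfl⟩, hA⟩
    have hU := (sdiff_subset_sdiff hV subset_rfl).trans (biUnion_sdiff_biUnion_subset_compl hT S)
    rw [← union_sdiff_self_eq_union] at hA ⊢
    rw [filter_subset_biUnion_union_eq hB hT hTB hU] at hA
    exact ⟨⟨S, _⟩, ⟨hA, hU⟩, rfl⟩
  · rintro ⟨⟨S, U⟩, ⟨hS, hU⟩, rfl⟩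
    have hSne : S.Nonempty := card_pos.mp (hS ▸ hj)
    have hUT : U ⊆ univ.biUnion T :=
      hU.trans (biUnion_subset_biUnion_of_subset_left T (subset_univ _))
    refine ⟨⟨S, U ∪ S.biUnion T, hSne, ?_, union_subset hUT ?_, ?_⟩, ?_⟩
    · obtain ⟨i, hi⟩ := hSne
      exact ⟨_, mem_union_right _ (mem_biUnion.mpr ⟨i, hi, (hTne i).choose_spec⟩)⟩
    · exact biUnion_subset_biUnion_of_subset_left T (subset_univ _)
    · rw [← union_assoc]
      exact (union_eq_left.mpr ((biUnion_mono fun i _ => hT i).trans subset_union_left)).symm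
    · rwa [filter_subset_biUnion_union_eq hB hT hTB hU]

lemma card_blockFamily_filter_card_blocks (hB : Pairwise (Disjoint on B)) (hT : ∀ i, T i ⊆ B i)
    (hTB : ∀ i, #(T i) < #(B i)) (hs : 0 < s) (hTcard : ∀ i, #(T i) = s) {j : ℕ}
    (hj : 1 ≤ j) :
    #((blockFamily B (univ.biUnion T)).filter (fun A => #(univ.filter (fun i => B i ⊆ A)) = j)) =
      m.choose j * 2 ^ (s * (m - j)) := by
  have hTne i : (T i).Nonempty := card_pos.mp (hTcard i ▸ hs)
  rw [blockFamily_filter_card_blocks_eq hB hT hTne hTB hj, card_image_of_injOn, card_sigma,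
    sum_congr rfl fun S hS => by
      rw [card_powerset, card_biUnion_compl hB hT hTcard, Fintype.card_fin,
        mem_powersetCard_univ.mp hS],
    sum_const, card_powersetCard, card_fin, smul_eq_mul]
  rintro ⟨S, U⟩ hSU ⟨S', U'⟩ hSU' heq
  simp only [coe_sigma, Set.mem_sigma_iff, mem_coe, mem_powerset] at hSU hSU' heq
  obtain rfl : S = S' := by
    rw [← filter_subset_biUnion_union_eq hB hT hTB hSU.2,
      ← filter_subset_biUnion_union_eq hB hT hTB hSU'.2, heq]
  have hdisj : Disjoint (S.biUnion B) (Sᶜ.biUnion T) :=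
    (disjoint_biUnion_left _ _ _).mpr fun i hi => (disjoint_biUnion_right _ _ _).mpr fun l hl =>
      (hB (ne_of_mem_of_not_mem hi (mem_compl.mp hl))).mono_right (hT l)
  rw [← union_sdiff_cancel_left (hdisj.mono_right hSU.2),
    ← union_sdiff_cancel_left (hdisj.mono_right hSU'.2), heq]

end BlockConstruction

lemma cast_choose_mul_two_pow_div (m s j : ℕ) (hj : j < m) :
    ((m.choose (j + 1) * 2 ^ (s * (m - (j + 1))) : ℕ) : ℝ) /
        (m.choose j * 2 ^ (s * (m - j)) : ℕ) =
      ((m - j) / (j + 1)) * (2 : ℝ) ^ (-(s : ℤ)) := by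
  obtain ⟨d, rfl⟩ := Nat.exists_eq_add_of_lt hj
  have hchoose : ((j + d + 1).choose (j + 1) : ℝ) * (j + 1) = (j + d + 1).choose j * (d + 1) := by
    have := Nat.choose_succ_right_eq (j + d + 1) j
    rw [show j + d + 1 - j = d + 1 by omega] at this
    exact_mod_cast this
  have hpos : ((j + d + 1).choose j : ℝ) ≠ 0 := by
    exact_mod_cast (Nat.choose_pos (by omega)).ne'
  rw [show j + d + 1 - (j + 1) = d by omega, show j + d + 1 - j = d + 1 by omega, zpow_neg,
    zpow_natCast, mul_add, pow_add, mul_one]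
  push_cast
  field_simp
  linear_combination hchoose

theorem blockFamily_count_ratio_general
    (k m s : ℕ) (hs : 0 < s) (hsk : s + 2 ≤ k)
    (B : Fin m → Finset (Fin (k * m)))
    (hBcard : ∀ i, (B i).card = k)
    (hBdisj : ∀ i j : Fin m, i ≠ j → Disjoint (B i) (B j))
    (T : Fin m → Finset (Fin (k * m)))
    (hT : ∀ i, T i ⊆ B i) (hTcard : ∀ i, (T i).card = s)
    (N : ℕ → ℕ)
    (hN : ∀ j : ℕ, N j = ((blockFamily B ((univ : Finset (Fin m)).biUnion T)).filter
      (fun A => (univ.filter (fun i : Fin m => B i ⊆ A)).card = j)).card) :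
    ∀ j : ℕ, 1 ≤ j → j ≤ m - 1 →
      (N (j + 1) : ℝ) / (N j : ℝ) = (((m : ℝ) - j) / ((j : ℝ) + 1)) * (2 : ℝ) ^ (-(s : ℤ)) ∧
      (N (j + 1) : ℝ) / (N j : ℝ) ≤ (m : ℝ) * (2 : ℝ) ^ (-(s : ℤ)) := by
  intro j hj hjm
  have hTB i : #(T i) < #(B i) := by rw [hTcard i, hBcard i]; omega
  have hcount {l : ℕ} (hl : 1 ≤ l) : N l = m.choose l * 2 ^ (s * (m - l)) :=
    (hN l).trans (card_blockFamily_filter_card_blocks hBdisj hT hTB hs hTcard hl)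
  have hratio : (N (j + 1) : ℝ) / N j = ((m - j) / (j + 1)) * (2 : ℝ) ^ (-(s : ℤ)) := by
    rw [hcount hj, hcount (by omega)]
    exact cast_choose_mul_two_pow_div m s j (by omega)
  refine ⟨hratio, hratio ▸ mul_le_mul_of_nonneg_right ?_ (by positivity)⟩
  have hjm' : (j : ℝ) ≤ m := by exact_mod_cast (by omega : j ≤ m)
  exact (div_le_self (sub_nonneg.mpr hjm') (by linarith)).trans (sub_le_self _ j.cast_nonneg)

/-- In the block construction, with `N_j` the number of sets in `F`
containing exactly `j` blocks, for all `j ∈ [m−1]` we have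
`N_{j+1}/N_j = ((m−j)/(j+1)) · 2^{−s} ≤ m · 2^{−s}`. -/
theorem blockFamily_count_ratio
    (k m s : ℕ) (hk : 0 < k) (hm : 2 ≤ m) (hs : 0 < s) (hsk : s + 2 ≤ k)
    (B : Fin m → Finset (Fin (k * m)))
    (hBcard : ∀ i, (B i).card = k)
    (hBdisj : ∀ i j : Fin m, i ≠ j → Disjoint (B i) (B j))
    (hBcover : (Finset.univ : Finset (Fin m)).biUnion B = (Finset.univ : Finset (Fin (k * m))))
    (T : Fin m → Finset (Fin (k * m)))
    (hT : ∀ i, T i ⊆ B i) (hTcard : ∀ i, (T i).card = s)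
    (N : ℕ → ℕ)
    (hN : ∀ j : ℕ, N j = ((blockFamily B ((univ : Finset (Fin m)).biUnion T)).filter
      (fun A => (univ.filter (fun i : Fin m => B i ⊆ A)).card = j)).card) :
    ∀ j : ℕ, 1 ≤ j → j ≤ m - 1 →
      (N (j + 1) : ℝ) / (N j : ℝ) = (((m : ℝ) - j) / ((j : ℝ) + 1)) * (2 : ℝ) ^ (-(s : ℤ)) ∧
      (N (j + 1) : ℝ) / (N j : ℝ) ≤ (m : ℝ) * (2 : ℝ) ^ (-(s : ℤ)) :=
  blockFamily_count_ratio_general k m s hs hsk B hBcard hBdisj T hT hTcard N hN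
end

section
/- In the block construction, if additionally m · 2^{−s} ≤ 1/4, then the average overlap density of F satisfies 1/m ≤ AOD(F) ≤ 2/m + m²s/n. -/
open Finset

/-!
Every member of the family is `⋃_{i ∈ S} B i ∪ J` for a unique pair with `S ≠ ∅` and
`J ⊆ ⋃_{i ∉ S} T i`; uniqueness holds because no block lies inside `T`. Counting these pairs with
`y = 2 ^ s` gives `|F| = (y + 1) ^ m - y ^ m`, and a point of `B i` lies in at least
`(y + 1) ^ (m - 1)` members (those with `i ∈ S`), with equality off `T`. Bernoulli's inequality
puts the ratio of these two counts between `1 / m` and `2 / m` once `m ≤ y + 1`, so every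
abundance is at least `1 / m` and every abundance off `T` at most `2 / m`. Averaging over a member,
which has at least `k` points of which at most `|T| = m s` lie in `T`, gives both bounds.
-/

open scoped BigOperators
open Function

section AOD

variable {α : Type*} [DecidableEq α] {F : Finset (Finset α)}

theorem AOD_eq_expect (F : Finset (Finset α)) :
    AOD F = 𝔼 A ∈ F.erase ∅, 𝔼 x ∈ A, abundance F x := by
  simp only [AOD, expect_eq_sum_div_card, one_div_mul_eq_div]

theorem abundance_le_one (F : Finset (Finset α)) (x : α) : abundance F x ≤ 1 :=
  div_le_one_of_le₀ (by exact_mod_cast card_filter_le F _) (Nat.cast_nonneg _)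

theorem le_AOD {c : ℝ} (hF : (F.erase ∅).Nonempty)
    (h : ∀ A ∈ F, ∀ x ∈ A, c ≤ abundance F x) : c ≤ AOD F := by
  rw [AOD_eq_expect]
  refine le_expect hF fun A hA => le_expect ?_ fun x hx => h A (mem_of_mem_erase hA) x hx
  exact nonempty_iff_ne_empty.2 (ne_of_mem_erase hA)

theorem expect_abundance_le {c : ℝ} (hc : 0 ≤ c) {A T : Finset α} (hA : A.Nonempty)
    (h : ∀ x ∈ A, x ∉ T → abundance F x ≤ c) :
    𝔼 x ∈ A, abundance F x ≤ c + #T / #A := by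
  have hsum : ∑ x ∈ A, abundance F x ≤ #A * c + #T :=
    calc ∑ x ∈ A, abundance F x ≤ ∑ x ∈ A, (c + if x ∈ T then 1 else 0) := by
          refine sum_le_sum fun x hx => ?_
          split_ifs with hxT
          · linarith [abundance_le_one F x]
          · simpa using h x hx hxT
      _ = #A * c + #{x ∈ A | x ∈ T} := by
          rw [sum_add_distrib, sum_const, sum_boole, nsmul_eq_mul]
      _ ≤ #A * c + #T := by
          gcongr
          exact fun x hx => (mem_filter.1 hx).2
  have hApos : (0 : ℝ) < #A := by exact_mod_cast hA.card_pos
  rw [expect_eq_sum_div_card, div_le_iff₀ hApos]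
  calc _ ≤ #A * c + #T := hsum
    _ = (c + #T / #A) * #A := by field_simp

theorem AOD_le {c : ℝ} (hc : 0 ≤ c) {k : ℕ} (hk : 0 < k) {T : Finset α}
    (hcard : ∀ A ∈ F, k ≤ #A) (h : ∀ A ∈ F, ∀ x ∈ A, x ∉ T → abundance F x ≤ c) :
    AOD F ≤ c + #T / k := by
  rw [AOD_eq_expect]
  rcases (F.erase ∅).eq_empty_or_nonempty with hF | hF
  · rw [hF, expect_empty]
    positivity
  refine expect_le hF fun A hA => ?_
  obtain ⟨hA0, hAF⟩ := mem_erase.1 hA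
  calc 𝔼 x ∈ A, abundance F x ≤ c + #T / #A :=
        expect_abundance_le hc (nonempty_iff_ne_empty.2 hA0) (h A hAF)
    _ ≤ c + #T / k := by
        gcongr
        exact_mod_cast hcard A hAF

end AOD

theorem add_one_pow_sub_pow_le {y : ℝ} (hy : 0 ≤ y) (p : ℕ) :
    (y + 1) ^ (p + 1) - y ^ (p + 1) ≤ (p + 1) * (y + 1) ^ p := by
  have bernoulli :=
    pow_add_mul_le_add_pow (a := y + 1) (b := -1) (by linarith) (by linarith) (p + 1)
  push_cast at bernoulli
  simp only [add_neg_cancel_right] at bernoulli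
  linarith

theorem add_one_pow_le_two_mul_add_one_pow_sub_pow {y : ℝ} {p : ℕ} (hp : (p : ℝ) ≤ y) :
    (p + 1) * (y + 1) ^ p ≤ 2 * ((y + 1) ^ (p + 1) - y ^ (p + 1)) := by
  have hy : 0 ≤ y := (Nat.cast_nonneg p).trans hp
  have bernoulli := pow_add_mul_le_add_pow (a := y) (b := 1) hy (by linarith) (p + 1)
  push_cast at bernoulli
  simp only [pow_succ, mul_one] at bernoulli ⊢
  -- multiply Bernoulli's `(y + p + 1) y ^ p ≤ (y + 1) ^ (p + 1)` by `2 y`, and use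
  -- `(2 y + 1 - p) (y + p + 1) - 2 y (y + 1) = p y + y + 1 - p ^ 2 ≥ 0`
  nlinarith [mul_le_mul_of_nonneg_left bernoulli (by positivity : (0 : ℝ) ≤ 2 * y),
    mul_nonneg (by positivity : (0 : ℝ) ≤ (y + 1) ^ p)
      (by nlinarith : (0 : ℝ) ≤ p * y + y + 1 - p ^ 2)]

section Subsets

variable {ι R : Type*} [Fintype ι] [DecidableEq ι] [CommSemiring R]

theorem sum_pow_card_compl_add (y : R) :
    ∑ S ∈ (univ : Finset (Finset ι)).erase ∅, y ^ #Sᶜ + y ^ Fintype.card ι =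
      (y + 1) ^ Fintype.card ι := by
  have hall : ∑ S : Finset ι, y ^ #Sᶜ = (y + 1) ^ Fintype.card ι := by
    rw [add_comm, ← Fintype.sum_pow_mul_eq_add_pow]
    simp [card_compl]
  rw [← hall, ← add_sum_erase univ _ (mem_univ ∅), add_comm]
  simp

theorem sum_pow_card_compl_of_mem (i : ι) (y : R) :
    ∑ S with i ∈ S, y ^ #Sᶜ = (y + 1) ^ (Fintype.card ι - 1) := by
  rw [← card_univ, ← card_erase_of_mem (mem_univ i), ← sum_pow_mul_eq_add_pow]
  simp only [one_pow, mul_one]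
  refine sum_nbij' compl compl (fun S hS => ?_) (fun U hU => ?_) (fun S _ => compl_compl S)
    (fun U _ => compl_compl U) (fun S _ => rfl)
  · simpa [subset_erase] using hS
  · simpa [subset_erase] using hU

end Subsets

section BlockFamily

variable {n m s : ℕ} {B T : Fin m → Finset (Fin n)}

def blockIndex (B T : Fin m → Finset (Fin n)) (𝒮 : Finset (Finset (Fin m))) :
    Finset (Σ _ : Finset (Fin m), Finset (Fin n)) :=
  𝒮.sigma fun S => (univ.biUnion T \ S.biUnion B).powerset

def blockUnion (B : Fin m → Finset (Fin n)) (p : Σ _ : Finset (Fin m), Finset (Fin n)) :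
    Finset (Fin n) :=
  p.1.biUnion B ∪ p.2

theorem mem_blockIndex {𝒮 : Finset (Finset (Fin m))} {p : Σ _ : Finset (Fin m), Finset (Fin n)} :
    p ∈ blockIndex B T 𝒮 ↔ p.1 ∈ 𝒮 ∧ p.2 ⊆ univ.biUnion T \ p.1.biUnion B := by
  simp [blockIndex]

theorem mem_biUnion_iff_of_mem (hB : Pairwise (Disjoint on B)) {S : Finset (Fin m)} {i : Fin m}
    {x : Fin n} (hx : x ∈ B i) : x ∈ S.biUnion B ↔ i ∈ S := by
  refine ⟨fun h => ?_, fun hi => mem_biUnion.2 ⟨i, hi, hx⟩⟩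
  obtain ⟨l, hl, hxl⟩ := mem_biUnion.1 h
  obtain rfl : l = i := by_contra fun hne => disjoint_left.1 (hB hne) hxl hx
  exact hl

theorem mem_of_mem_biUnion_of_mem (hB : Pairwise (Disjoint on B)) (hT : ∀ i, T i ⊆ B i)
    {i : Fin m} {x : Fin n} (hx : x ∈ univ.biUnion T) (hxi : x ∈ B i) : x ∈ T i := by
  obtain ⟨l, -, hxl⟩ := mem_biUnion.1 hx
  obtain rfl : l = i := by_contra fun hne => disjoint_left.1 (hB hne) (hT l hxl) hxi
  exact hxl

theorem sdiff_biUnion_eq_biUnion_compl (hB : Pairwise (Disjoint on B)) (hT : ∀ i, T i ⊆ B i)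
    (S : Finset (Fin m)) : univ.biUnion T \ S.biUnion B = Sᶜ.biUnion T := by
  ext x
  simp only [mem_sdiff, mem_biUnion, mem_univ, true_and, mem_compl]
  constructor
  · rintro ⟨⟨i, hi⟩, hS⟩
    exact ⟨i, fun hiS => hS ⟨i, hiS, hT i hi⟩, hi⟩
  · rintro ⟨i, hiS, hi⟩
    exact ⟨⟨i, hi⟩, fun h => hiS ((mem_biUnion_iff_of_mem hB (hT i hi)).1 (mem_biUnion.2 h))⟩

theorem card_biUnion_of_card_eq (hB : Pairwise (Disjoint on B)) (hT : ∀ i, T i ⊆ B i)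
    (hTs : ∀ i, #(T i) = s) (S : Finset (Fin m)) : #(S.biUnion T) = #S * s := by
  rw [card_biUnion fun i _ j _ hij => (hB hij).mono (hT i) (hT j), sum_congr rfl fun i _ => hTs i,
    sum_const, smul_eq_mul]

theorem sup_union_singleton (B : Fin m → Finset (Fin n)) (P : Finset (Fin m × Fin n)) :
    P.sup (fun p => B p.1 ∪ {p.2}) = (P.image Prod.fst).biUnion B ∪ P.image Prod.snd := by
  ext x
  simp only [mem_sup, mem_union, mem_singleton, mem_biUnion, mem_image]
  aesop

theorem blockFamily_subset_image :
    blockFamily B (univ.biUnion T) ⊆ (blockIndex B T (univ.erase ∅)).image (blockUnion B) := by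
  intro A hA
  obtain ⟨C, hC, rfl⟩ := mem_image.1 hA
  obtain ⟨hCG, hCne⟩ := mem_filter.1 hC
  obtain ⟨P, hP, rfl⟩ := subset_image_iff.1 (mem_powerset.1 hCG)
  set S := P.image Prod.fst
  refine mem_image.2 ⟨⟨S, P.image Prod.snd \ S.biUnion B⟩, mem_blockIndex.2 ⟨?_, ?_⟩, ?_⟩
  · simpa [S, ← nonempty_iff_ne_empty] using hCne
  · refine sdiff_subset_sdiff (fun j hj => ?_) le_rfl
    obtain ⟨p, hp, rfl⟩ := mem_image.1 hj
    exact (mem_product.1 (hP hp)).2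
  · rw [blockUnion, union_sdiff_self_eq_union, sup_image, Function.id_comp, sup_union_singleton]

theorem image_subset_blockFamily (hT : ∀ i, T i ⊆ B i) (hTne : ∀ i, (T i).Nonempty) :
    (blockIndex B T (univ.erase ∅)).image (blockUnion B) ⊆ blockFamily B (univ.biUnion T) := by
  intro A hA
  obtain ⟨⟨S, J⟩, hp, rfl⟩ := mem_image.1 hA
  obtain ⟨hS, hJ⟩ := mem_blockIndex.1 hp
  obtain ⟨i, hi⟩ := nonempty_iff_ne_empty.2 (ne_of_mem_erase hS)
  obtain ⟨j, hj⟩ := hTne i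
  have hjT : j ∈ univ.biUnion T := mem_biUnion.2 ⟨i, mem_univ i, hj⟩
  -- `j ∈ B i` is absorbed by the union, so adding it to `J` turns the generators into a product
  refine mem_image.2 ⟨(S ×ˢ insert j J).image fun p => B p.1 ∪ {p.2}, mem_filter.2 ⟨?_, ?_⟩, ?_⟩
  · refine mem_powerset.2 (image_subset_image (product_subset_product (subset_univ S) ?_))
    exact insert_subset hjT fun x hx => (mem_sdiff.1 (hJ hx)).1
  · exact (Nonempty.product ⟨i, hi⟩ (insert_nonempty j J)).image _
  · rw [sup_image, Function.id_comp, sup_union_singleton, product_image_fst (insert_nonempty j J),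
      product_image_snd ⟨i, hi⟩, union_insert, blockUnion,
      insert_eq_of_mem (mem_union_left _ (mem_biUnion.2 ⟨i, hi, hT i hj⟩))]

theorem blockFamily_eq_image (hT : ∀ i, T i ⊆ B i) (hTne : ∀ i, (T i).Nonempty) :
    blockFamily B (univ.biUnion T) = (blockIndex B T (univ.erase ∅)).image (blockUnion B) :=
  blockFamily_subset_image.antisymm (image_subset_blockFamily hT hTne)

theorem le_card_of_mem_blockFamily {k : ℕ} (hBk : ∀ i, #(B i) = k) {A : Finset (Fin n)}
    (hA : A ∈ blockFamily B (univ.biUnion T)) : k ≤ #A := by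
  obtain ⟨p, hp, rfl⟩ := mem_image.1 (blockFamily_subset_image hA)
  obtain ⟨i, hi⟩ := nonempty_iff_ne_empty.2 (ne_of_mem_erase (mem_blockIndex.1 hp).1)
  exact (hBk i).ge.trans (card_le_card (subset_union_left.trans' (subset_biUnion_of_mem B hi)))

theorem exists_mem_of_mem_blockFamily (hT : ∀ i, T i ⊆ B i) {A : Finset (Fin n)} {x : Fin n}
    (hA : A ∈ blockFamily B (univ.biUnion T)) (hx : x ∈ A) : ∃ i, x ∈ B i := by
  obtain ⟨p, hp, rfl⟩ := mem_image.1 (blockFamily_subset_image hA)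
  rcases mem_union.1 hx with hx | hx
  · obtain ⟨i, -, hi⟩ := mem_biUnion.1 hx
    exact ⟨i, hi⟩
  · obtain ⟨i, -, hi⟩ := mem_biUnion.1 (mem_sdiff.1 ((mem_blockIndex.1 hp).2 hx)).1
    exact ⟨i, hT i hi⟩

theorem subset_blockUnion_iff (hB : Pairwise (Disjoint on B)) (hTB : ∀ i, T i ⊂ B i)
    {𝒮 : Finset (Finset (Fin m))} {p : Σ _ : Finset (Fin m), Finset (Fin n)}
    (hp : p ∈ blockIndex B T 𝒮) (i : Fin m) : B i ⊆ blockUnion B p ↔ i ∈ p.1 := by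
  refine ⟨fun h => ?_, fun hi => subset_union_left.trans' (subset_biUnion_of_mem B hi)⟩
  by_contra hi
  obtain ⟨x, hxB, hxT⟩ := exists_of_ssubset (hTB i)
  rcases mem_union.1 (h hxB) with hx | hx
  · exact hi ((mem_biUnion_iff_of_mem hB hxB).1 hx)
  · have hxT' := (mem_sdiff.1 ((mem_blockIndex.1 hp).2 hx)).1
    exact hxT (mem_of_mem_biUnion_of_mem hB (fun i => (hTB i).subset) hxT' hxB)

theorem injOn_blockUnion (hB : Pairwise (Disjoint on B)) (hTB : ∀ i, T i ⊂ B i)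
    (𝒮 : Finset (Finset (Fin m))) : Set.InjOn (blockUnion B) (blockIndex B T 𝒮) := by
  rintro ⟨S, J⟩ hp ⟨S', J'⟩ hq h
  obtain rfl : S = S' := ext fun i => by
    rw [← subset_blockUnion_iff hB hTB hp, ← subset_blockUnion_iff hB hTB hq, h]
  have hJ : ∀ {J}, J ⊆ univ.biUnion T \ S.biUnion B → (blockUnion B ⟨S, J⟩) \ S.biUnion B = J :=
    fun hJ => union_sdiff_cancel_left (disjoint_of_subset_right hJ disjoint_sdiff)
  obtain rfl : J = J' := (hJ (mem_blockIndex.1 hp).2).symm.trans (h ▸ hJ (mem_blockIndex.1 hq).2)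
  rfl

theorem card_blockIndex (hB : Pairwise (Disjoint on B)) (hT : ∀ i, T i ⊆ B i)
    (hTs : ∀ i, #(T i) = s) (𝒮 : Finset (Finset (Fin m))) :
    #(blockIndex B T 𝒮) = ∑ S ∈ 𝒮, (2 ^ s) ^ #Sᶜ := by
  rw [blockIndex, card_sigma]
  refine sum_congr rfl fun S _ => ?_
  rw [card_powerset, sdiff_biUnion_eq_biUnion_compl hB hT, card_biUnion_of_card_eq hB hT hTs,
    ← pow_mul, mul_comm]

theorem card_filter_blockFamily (hB : Pairwise (Disjoint on B)) (hTB : ∀ i, T i ⊂ B i)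
    (hTne : ∀ i, (T i).Nonempty) (P : Finset (Fin n) → Prop) [DecidablePred P] :
    #{A ∈ blockFamily B (univ.biUnion T) | P A} =
      #{p ∈ blockIndex B T (univ.erase ∅) | P (blockUnion B p)} := by
  rw [blockFamily_eq_image (fun i => (hTB i).subset) hTne, filter_image,
    card_image_of_injOn ((injOn_blockUnion hB hTB _).mono (filter_subset _ _))]

theorem card_blockFamily_add_pow (hB : Pairwise (Disjoint on B)) (hTB : ∀ i, T i ⊂ B i)
    (hTs : ∀ i, #(T i) = s) (hs : 0 < s) :
    #(blockFamily B (univ.biUnion T)) + (2 ^ s) ^ m = (2 ^ s + 1) ^ m := by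
  have hcard := card_filter_blockFamily hB hTB (fun i => card_pos.1 (hTs i ▸ hs)) fun _ => True
  rw [filter_true, filter_true] at hcard
  rw [hcard, card_blockIndex hB (fun i => (hTB i).subset) hTs]
  simpa using sum_pow_card_compl_add (ι := Fin m) (2 ^ s)

theorem mem_blockUnion_iff (hB : Pairwise (Disjoint on B)) {i : Fin m} {x : Fin n} (hx : x ∈ B i)
    (p : Σ _ : Finset (Fin m), Finset (Fin n)) : x ∈ blockUnion B p ↔ i ∈ p.1 ∨ x ∈ p.2 := by
  rw [blockUnion, mem_union, mem_biUnion_iff_of_mem hB hx]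

theorem pow_le_card_filter_mem_blockFamily (hB : Pairwise (Disjoint on B))
    (hTB : ∀ i, T i ⊂ B i) (hTs : ∀ i, #(T i) = s) (hs : 0 < s) {i : Fin m} {x : Fin n}
    (hx : x ∈ B i) :
    (2 ^ s + 1) ^ (m - 1) ≤ #{A ∈ blockFamily B (univ.biUnion T) | x ∈ A} := by
  rw [card_filter_blockFamily hB hTB fun i => card_pos.1 (hTs i ▸ hs)]
  calc (2 ^ s + 1) ^ (m - 1) = #(blockIndex B T {S | i ∈ S}) := by
        rw [card_blockIndex hB (fun i => (hTB i).subset) hTs]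
        simpa using (sum_pow_card_compl_of_mem i (2 ^ s)).symm
    _ ≤ _ := card_le_card fun p hp => by
        obtain ⟨hi, hJ⟩ := mem_blockIndex.1 hp
        have hi : i ∈ p.1 := (mem_filter.1 hi).2
        exact mem_filter.2 ⟨mem_blockIndex.2 ⟨mem_erase.2 ⟨ne_empty_of_mem hi, mem_univ _⟩, hJ⟩,
          (mem_blockUnion_iff hB hx p).2 (Or.inl hi)⟩

theorem card_filter_mem_blockFamily_of_notMem (hB : Pairwise (Disjoint on B))
    (hTB : ∀ i, T i ⊂ B i) (hTs : ∀ i, #(T i) = s) (hs : 0 < s) {i : Fin m} {x : Fin n}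
    (hx : x ∈ B i) (hxT : x ∉ univ.biUnion T) :
    #{A ∈ blockFamily B (univ.biUnion T) | x ∈ A} = (2 ^ s + 1) ^ (m - 1) := by
  have hfilter : {p ∈ blockIndex B T (univ.erase ∅) | x ∈ blockUnion B p} =
      blockIndex B T {S | i ∈ S} := by
    ext p
    have hxJ : p.2 ⊆ univ.biUnion T \ p.1.biUnion B → x ∉ p.2 := fun hJ hxJ =>
      hxT (mem_sdiff.1 (hJ hxJ)).1
    simp only [mem_filter, mem_blockIndex, mem_blockUnion_iff hB hx, mem_erase, mem_univ,
      and_true, true_and]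
    constructor
    · rintro ⟨⟨-, hJ⟩, hi | hxp⟩
      · exact ⟨hi, hJ⟩
      · exact absurd hxp (hxJ hJ)
    · rintro ⟨hi, hJ⟩
      exact ⟨⟨ne_empty_of_mem hi, hJ⟩, Or.inl hi⟩
  rw [card_filter_blockFamily hB hTB fun i => card_pos.1 (hTs i ▸ hs), hfilter,
    card_blockIndex hB (fun i => (hTB i).subset) hTs]
  simpa using sum_pow_card_compl_of_mem i (2 ^ s)

theorem card_blockFamily (hB : Pairwise (Disjoint on B)) (hTB : ∀ i, T i ⊂ B i)
    (hTs : ∀ i, #(T i) = s) (hs : 0 < s) :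
    (#(blockFamily B (univ.biUnion T)) : ℝ) = (2 ^ s + 1) ^ m - (2 ^ s) ^ m := by
  rw [eq_sub_iff_add_eq]
  exact_mod_cast card_blockFamily_add_pow hB hTB hTs hs

theorem card_blockFamily_pos (hB : Pairwise (Disjoint on B)) (hTB : ∀ i, T i ⊂ B i)
    (hTs : ∀ i, #(T i) = s) (hs : 0 < s) (hm : 0 < m) :
    (0 : ℝ) < #(blockFamily B (univ.biUnion T)) := by
  rw [card_blockFamily hB hTB hTs hs, sub_pos]
  exact pow_lt_pow_left₀ (lt_add_one _) (by positivity) hm.ne'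

theorem inv_le_abundance_blockFamily (hB : Pairwise (Disjoint on B)) (hTB : ∀ i, T i ⊂ B i)
    (hTs : ∀ i, #(T i) = s) (hs : 0 < s) (hm : 0 < m) {i : Fin m} {x : Fin n} (hx : x ∈ B i) :
    (m : ℝ)⁻¹ ≤ abundance (blockFamily B (univ.biUnion T)) x := by
  have hFx : ((2 ^ s + 1) ^ (m - 1) : ℝ) ≤ #{A ∈ blockFamily B (univ.biUnion T) | x ∈ A} := by
    exact_mod_cast pow_le_card_filter_mem_blockFamily hB hTB hTs hs hx
  rw [abundance, le_div_iff₀ (card_blockFamily_pos hB hTB hTs hs hm),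
    card_blockFamily hB hTB hTs hs, inv_mul_le_iff₀ (by positivity)]
  obtain ⟨p, rfl⟩ : ∃ p, m = p + 1 := ⟨m - 1, by omega⟩
  calc _ ≤ (p + 1 : ℝ) * (2 ^ s + 1) ^ p := add_one_pow_sub_pow_le (by positivity) p
    _ ≤ _ := by push_cast; gcongr; simpa using hFx

theorem abundance_blockFamily_le (hB : Pairwise (Disjoint on B)) (hTB : ∀ i, T i ⊂ B i)
    (hTs : ∀ i, #(T i) = s) (hs : 0 < s) (hm : 0 < m) (hsm : m ≤ 2 ^ s + 1) {i : Fin m}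
    {x : Fin n} (hx : x ∈ B i) (hxT : x ∉ univ.biUnion T) :
    abundance (blockFamily B (univ.biUnion T)) x ≤ 2 / m := by
  rw [abundance, div_le_div_iff₀ (card_blockFamily_pos hB hTB hTs hs hm) (by positivity),
    card_blockFamily hB hTB hTs hs, card_filter_mem_blockFamily_of_notMem hB hTB hTs hs hx hxT]
  obtain ⟨p, rfl⟩ : ∃ p, m = p + 1 := ⟨m - 1, by omega⟩
  have hp : (p : ℝ) ≤ 2 ^ s := by exact_mod_cast (by omega : p ≤ 2 ^ s)
  push_cast
  simpa [mul_comm] using add_one_pow_le_two_mul_add_one_pow_sub_pow hp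

end BlockFamily

theorem four_mul_le_two_pow {m s : ℕ} (h : (m : ℝ) * (2 : ℝ) ^ (-(s : ℤ)) ≤ 1 / 4) :
    4 * m ≤ 2 ^ s := by
  rw [zpow_neg, zpow_natCast, ← div_eq_mul_inv, div_le_iff₀ (by positivity)] at h
  exact_mod_cast (by linarith : (4 * m : ℝ) ≤ 2 ^ s)

theorem blockFamily_AOD_bounds_general
    (k m s : ℕ) (hm : 2 ≤ m) (hs : 0 < s) (hsk : s + 2 ≤ k)
    (B : Fin m → Finset (Fin (k * m)))
    (hBcard : ∀ i, (B i).card = k)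
    (hBdisj : ∀ i j : Fin m, i ≠ j → Disjoint (B i) (B j))
    (T : Fin m → Finset (Fin (k * m)))
    (hT : ∀ i, T i ⊆ B i) (hTcard : ∀ i, (T i).card = s)
    (hτ : (m : ℝ) * (2 : ℝ) ^ (-(s : ℤ)) ≤ 1 / 4) :
    1 / (m : ℝ) ≤ AOD (blockFamily B ((univ : Finset (Fin m)).biUnion T)) ∧
    AOD (blockFamily B ((univ : Finset (Fin m)).biUnion T))
      ≤ 2 / (m : ℝ) + (m : ℝ) ^ 2 * (s : ℝ) / ((k * m : ℕ) : ℝ) := by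
  have hB : Pairwise (Disjoint on B) := fun i j => hBdisj i j
  have hTB : ∀ i, T i ⊂ B i := fun i =>
    (hT i).ssubset_of_ne fun h => by have := hBcard i; rw [← h, hTcard] at this; omega
  have hsm := four_mul_le_two_pow hτ
  set F := blockFamily B (univ.biUnion T)
  have hcard : ∀ A ∈ F, k ≤ #A := fun A => le_card_of_mem_blockFamily hBcard
  have hF : F.erase ∅ = F := erase_eq_of_notMem fun h => absurd (hcard ∅ h) (by simp; omega)
  refine ⟨one_div (m : ℝ) ▸ le_AOD ?_ fun A hA x hx => ?_, ?_⟩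
  · rw [hF, ← card_pos]
    exact_mod_cast card_blockFamily_pos hB hTB hTcard hs (by omega)
  · obtain ⟨i, hi⟩ := exists_mem_of_mem_blockFamily hT hA hx
    exact inv_le_abundance_blockFamily hB hTB hTcard hs (by omega) hi
  calc AOD F ≤ 2 / m + #(univ.biUnion T) / k :=
        AOD_le (by positivity) (by omega) hcard fun A hA x hx hxT => by
          obtain ⟨i, hi⟩ := exists_mem_of_mem_blockFamily hT hA hx
          exact abundance_blockFamily_le hB hTB hTcard hs (by omega) (by omega) hi hxT
    _ = _ := by
        rw [card_biUnion_of_card_eq hB hT hTcard, card_univ, Fintype.card_fin]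
        have hk : (k : ℝ) ≠ 0 := Nat.cast_ne_zero.2 (by omega)
        push_cast
        field_simp

/-- In the block construction, if `m · 2^{−s} ≤ 1/4`, then
`1/m ≤ AOD(F) ≤ 2/m + m²s/n` (with `n = km`). -/
theorem blockFamily_AOD_bounds
    (k m s : ℕ) (hk : 0 < k) (hm : 2 ≤ m) (hs : 0 < s) (hsk : s + 2 ≤ k)
    (B : Fin m → Finset (Fin (k * m)))
    (hBcard : ∀ i, (B i).card = k)
    (hBdisj : ∀ i j : Fin m, i ≠ j → Disjoint (B i) (B j))
    (hBcover : (Finset.univ : Finset (Fin m)).biUnion B = (Finset.univ : Finset (Fin (k * m))))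
    (T : Fin m → Finset (Fin (k * m)))
    (hT : ∀ i, T i ⊆ B i) (hTcard : ∀ i, (T i).card = s)
    (hτ : (m : ℝ) * (2 : ℝ) ^ (-(s : ℤ)) ≤ 1 / 4) :
    1 / (m : ℝ) ≤ AOD (blockFamily B ((univ : Finset (Fin m)).biUnion T)) ∧
    AOD (blockFamily B ((univ : Finset (Fin m)).biUnion T))
      ≤ 2 / (m : ℝ) + (m : ℝ) ^ 2 * (s : ℝ) / ((k * m : ℕ) : ℝ) :=
  blockFamily_AOD_bounds_general k m s hm hs hsk B hBcard hBdisj T hT hTcard hτ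
end
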